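/- arXiv:math/0205301 — 2 statements merged into one kernel-verified Lean document; each statement's English description precedes it below -/
import Mathlib

section
/- Let S(n,k) be the Stirling number of the second kind, realized as the number of equivalence relations on Fin n with exactly k equivalence classes, i.e. S(n,k) = Fintype.card {s : Setoid (Fin n) // Fintype.card (Quotient s) = k}. Then for all n ≥ 1 and all k, \sum_{l=k}^{n-1} \binom{n-1}{l} S(l,k) = S(n, k+1). -/
instance instFiniteSetoidFin (n : ℕ) : Finite (Setoid (Fin n)) :=
  Finite.of_injective (fun s => s.r) fun a b h => by cases a; cases b; congr

noncomputable instance instFintypeQuotSetoidFin (n : ℕ) (s : Setoid (Fin n)) :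
    Fintype (Quotient s) :=
  Fintype.ofFinite _

noncomputable instance instFintypeSetoidFinCard (n k : ℕ) :
    Fintype {s : Setoid (Fin n) // Fintype.card (Quotient s) = k} :=
  Fintype.ofFinite _

/-- The Stirling number of the second kind `S n k`, the number of partitions of an
`n`-element set into exactly `k` nonempty blocks, realized as the number of setoids on
`Fin n` whose quotient has exactly `k` elements. -/
noncomputable def S (n k : ℕ) : ℕ :=
  Fintype.card {s : Setoid (Fin n) // Fintype.card (Quotient s) = k}

/-!
A partition of `Option α` into `k + 1` blocks is the same as the set `A ⊆ α` of points outside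
the block of `none` together with an arbitrary partition of `A` into `k` blocks. For
`α = Fin n`, summing over `A` and grouping the subsets by size gives
`S (n + 1) (k + 1) = ∑ l, (n choose l) * S l k`; the terms with `l < k` vanish.
-/

open Finset Function

instance Setoid.instFinite {α : Type*} [Finite α] : Finite (Setoid α) :=
  Finite.of_injective (fun s => s.r) fun a b h => by cases a; cases b; congr

def Equiv.setoidCongr {α β : Type*} (e : α ≃ β) : Setoid α ≃ Setoid β where
  toFun s := s.comap e.symm
  invFun s := s.comap e
  left_inv s := Setoid.ext fun a b => by simp [Setoid.comap_rel]
  right_inv s := Setoid.ext fun a b => by simp [Setoid.comap_rel]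

noncomputable def partitionCount (α : Type*) (k : ℕ) : ℕ :=
  Nat.card {s : Setoid α // Nat.card (Quotient s) = k}

lemma partitionCount_congr {α β : Type*} (e : α ≃ β) (k : ℕ) :
    partitionCount α k = partitionCount β k :=
  Nat.card_congr <| e.setoidCongr.subtypeEquiv fun s => by
    rw [← Nat.card_congr (Quotient.congr e fun a b => by
      change s a b ↔ s (e.symm (e a)) (e.symm (e b))
      simp)]

namespace Setoid

variable {α : Type*}

open Classical in
noncomputable def outsideNoneClass [Fintype α] (s : Setoid (Option α)) : Finset α :=
  univ.filter fun a => ¬ s (some a) none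

lemma mem_outsideNoneClass [Fintype α] {s : Setoid (Option α)} {a : α} :
    a ∈ outsideNoneClass s ↔ ¬ s (some a) none := by
  simp [outsideNoneClass]

variable [DecidableEq α]

def restrictSome (A : Finset α) (s : Setoid (Option α)) : Setoid A :=
  s.comap fun a => some a.1

def extendNoneFun (A : Finset α) (t : Setoid A) : Option α → Option (Quotient t) :=
  fun x => x.bind fun a => if h : a ∈ A then some ⟦⟨a, h⟩⟧ else none

def extendNone (A : Finset α) (t : Setoid A) : Setoid (Option α) :=
  ker (extendNoneFun A t)

lemma extendNoneFun_some_of_mem {A : Finset α} (t : Setoid A) {a : α} (h : a ∈ A) :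
    extendNoneFun A t (some a) = some ⟦⟨a, h⟩⟧ := by
  simp [extendNoneFun, h]

lemma extendNoneFun_eq_none_iff {A : Finset α} (t : Setoid A) {x : Option α} :
    extendNoneFun A t x = none ↔ ∀ a ∈ x, a ∉ A := by
  cases x <;> simp [extendNoneFun]

lemma extendNoneFun_surjective (A : Finset α) (t : Setoid A) :
    Surjective (extendNoneFun A t) := by
  rintro (_ | q)
  · exact ⟨none, rfl⟩
  · obtain ⟨⟨a, h⟩, rfl⟩ := Quotient.mk_surjective q
    exact ⟨some a, extendNoneFun_some_of_mem t h⟩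

lemma restrictSome_extendNone (A : Finset α) (t : Setoid A) :
    restrictSome A (extendNone A t) = t :=
  Setoid.ext fun a b => by
    change extendNoneFun A t (some a.1) = extendNoneFun A t (some b.1) ↔ t a b
    rw [extendNoneFun_some_of_mem t a.2, extendNoneFun_some_of_mem t b.2, Option.some_inj,
      Quotient.eq]

lemma card_quotient_extendNone [Finite α] (A : Finset α) (t : Setoid A) :
    Nat.card (Quotient (extendNone A t)) = Nat.card (Quotient t) + 1 := by
  have := Fintype.ofFinite (Quotient t)
  rw [extendNone, Nat.card_congr (quotientKerEquivOfSurjective _ (extendNoneFun_surjective A t)),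
    Nat.card_eq_fintype_card, Fintype.card_option, Nat.card_eq_fintype_card]

variable [Fintype α]

lemma outsideNoneClass_extendNone (A : Finset α) (t : Setoid A) :
    outsideNoneClass (extendNone A t) = A := by
  ext a
  rw [mem_outsideNoneClass]
  change ¬ extendNoneFun A t (some a) = none ↔ a ∈ A
  simp [extendNoneFun_eq_none_iff]

lemma extendNone_restrictSome (s : Setoid (Option α)) :
    extendNone (outsideNoneClass s) (restrictSome (outsideNoneClass s) s) = s := by
  set t := restrictSome (outsideNoneClass s) s
  have eq_none_iff : ∀ x, extendNoneFun _ t x = none ↔ s x none := by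
    rintro (_ | a)
    · exact iff_of_true rfl (s.refl none)
    · simp [extendNoneFun_eq_none_iff, mem_outsideNoneClass]
  have eq_some (x : Option α) (hx : ¬ s x none) :
      ∃ a, ∃ h : a ∈ outsideNoneClass s,
        x = some a ∧ extendNoneFun _ t x = some ⟦⟨a, h⟩⟧ := by
    obtain ⟨a, rfl⟩ := (Option.ne_none_iff_exists' (o := x)).1
      (by rintro rfl; exact hx (s.refl none))
    exact ⟨a, mem_outsideNoneClass.2 hx, rfl, extendNoneFun_some_of_mem t _⟩
  ext x y
  change extendNoneFun _ t x = extendNoneFun _ t y ↔ s x y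
  by_cases hx : s x none
  · rw [(eq_none_iff x).2 hx, eq_comm, eq_none_iff]
    exact ⟨fun hy => s.trans hx (s.symm hy), fun hxy => s.trans (s.symm hxy) hx⟩
  by_cases hy : s y none
  · rw [(eq_none_iff y).2 hy, eq_none_iff]
    exact iff_of_false hx fun hxy => hx (s.trans hxy hy)
  obtain ⟨a, ha, rfl, hfa⟩ := eq_some x hx
  obtain ⟨b, hb, rfl, hfb⟩ := eq_some y hy
  rw [hfa, hfb, Option.some_inj, Quotient.eq]
  rfl

noncomputable def succClassesFiberEquiv (A : Finset α) (k : ℕ) :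
    {s : {s : Setoid (Option α) // Nat.card (Quotient s) = k + 1} //
      outsideNoneClass s.1 = A} ≃
      {t : Setoid A // Nat.card (Quotient t) = k} where
  toFun s := ⟨restrictSome A s.1.1, by
    obtain ⟨⟨s, hk⟩, rfl⟩ := s
    rw [← extendNone_restrictSome s, card_quotient_extendNone] at hk
    exact Nat.succ_injective hk⟩
  invFun t := ⟨⟨extendNone A t.1, by rw [card_quotient_extendNone, t.2]⟩,
    outsideNoneClass_extendNone A t.1⟩
  left_inv s := by
    obtain ⟨⟨s, hk⟩, rfl⟩ := s
    exact Subtype.ext (Subtype.ext (extendNone_restrictSome s))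
  right_inv t := Subtype.ext (restrictSome_extendNone A t.1)

end Setoid

lemma partitionCount_option_succ {α : Type*} [Fintype α] [DecidableEq α] (k : ℕ) :
    partitionCount (Option α) (k + 1) = ∑ A : Finset α, partitionCount A k := by
  rw [partitionCount,
    ← Nat.card_congr (Equiv.sigmaFiberEquiv fun s => Setoid.outsideNoneClass s.1), Nat.card_sigma]
  exact sum_congr rfl fun A _ => Nat.card_congr (Setoid.succClassesFiberEquiv A k)

lemma S_eq_partitionCount (n k : ℕ) : S n k = partitionCount (Fin n) k := by
  rw [partitionCount, S, ← Nat.card_eq_fintype_card]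
  exact Nat.card_congr (Equiv.subtypeEquivRight fun s => by rw [Nat.card_eq_fintype_card])

lemma S_eq_zero_of_lt {n k : ℕ} (h : n < k) : S n k = 0 := by
  rw [S, Fintype.card_eq_zero_iff]
  refine ⟨fun ⟨s, hs⟩ => ?_⟩
  have := Fintype.card_le_of_surjective (Quotient.mk s) Quotient.mk_surjective
  rw [Fintype.card_fin, hs] at this
  omega

/-- For all `n ≥ 1` and all `k`, `∑_{l=k}^{n-1} (n-1 choose l) * S l k = S n (k+1)`. -/
theorem stirling_binomial_identity (n k : ℕ) (hn : 1 ≤ n) :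
    ∑ l ∈ Finset.Icc k (n - 1), (n - 1).choose l * S l k = S n (k + 1) := by
  obtain ⟨m, rfl⟩ : ∃ m, n = m + 1 := ⟨n - 1, by omega⟩
  have S_card (A : Finset (Fin m)) : partitionCount A k = S A.card k := by
    rw [S_eq_partitionCount]
    exact partitionCount_congr A.equivFin k
  rw [Nat.add_sub_cancel, S_eq_partitionCount, partitionCount_congr (finSuccEquiv m),
    partitionCount_option_succ, ← powerset_univ]
  simp only [S_card]
  rw [sum_powerset_apply_card (fun j => S j k), card_univ, Fintype.card_fin]
  simp only [smul_eq_mul]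
  refine sum_subset (fun j hj => by simp at hj ⊢; omega) fun j hj hj' => ?_
  rw [S_eq_zero_of_lt (by simp at hj hj'; omega), mul_zero]
end

section
/- There exists a unique formal power series A over ℚ with constant coefficient 0 satisfying A(e^X - 1) = 2·A - X, i.e. subst (exp - 1) A = 2A - X; moreover, for every n, n!·(coeff n A) is an integer (these integers are 1, 1, 4, 32, 436, 9012, ..., giving the number of rooted trees with n+1 labeled nodes all at the same height). -/
open PowerSeries

/-- Substitution of the power series `a` (which should have zero constant term) into the
power series `f`, i.e. `f(a)`.  Since `a` has zero constant term, the coefficient of `X^n`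
in `f(a)` is the finite sum `∑_{k=0}^{n} (coeff k f) * (coeff n (a^k))`. -/
noncomputable def PowerSeries.substOld (a f : PowerSeries ℚ) : PowerSeries ℚ :=
  PowerSeries.mk fun n =>
    ∑ k ∈ Finset.range (n + 1), (PowerSeries.coeff k f) * (PowerSeries.coeff n (a ^ k))

/-- Stirling numbers of the second kind. -/
def stir : ℕ → ℕ → ℕ
  | 0, 0 => 1
  | 0, _ + 1 => 0
  | _ + 1, 0 => 0
  | n + 1, k + 1 => (k + 1) * stir n (k + 1) + stir n k

lemma derivative_exp_sub_one :
    d⁄dX ℚ (exp ℚ - 1) = (exp ℚ - 1) + 1 := by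
  ext n
  rw [coeff_derivative]
  simp [coeff_exp, map_sub, coeff_one, Nat.factorial_succ]
  have h : ((n : ℚ) + 1) ≠ 0 := by positivity
  field_simp

lemma key (n k : ℕ) :
    (n.factorial : ℚ) * coeff n ((exp ℚ - 1) ^ k) = (k.factorial : ℚ) * stir n k := by
  induction n generalizing k with
  | zero =>
    cases k with
    | zero => simp [stir]
    | succ k =>
      simp [stir, coeff_zero_eq_constantCoeff, map_pow, map_sub]
  | succ n ih =>
    cases k with
    | zero => simp [stir]
    | succ k =>
      have hd : d⁄dX ℚ ((exp ℚ - 1) ^ (k+1)) =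
          (k+1) • ((exp ℚ - 1) ^ (k+1) + (exp ℚ - 1) ^ k) := by
        rw [Derivation.leibniz_pow, derivative_exp_sub_one]
        simp only [smul_eq_mul, nsmul_eq_mul]
        push_cast
        ring
      have h2 : coeff (n+1) ((exp ℚ - 1)^(k+1)) * ((n : ℚ)+1) =
          ((k : ℚ)+1) * (coeff n ((exp ℚ - 1)^(k+1)) + coeff n ((exp ℚ - 1)^k)) := by
        rw [← coeff_derivative, hd, map_nsmul, map_add, nsmul_eq_mul]
        push_cast
        ring
      have e1 := ih (k+1)
      have e2 := ih k
      simp only [stir]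
      push_cast [Nat.factorial_succ]
      push_cast [Nat.factorial_succ] at e1 e2
      linear_combination ((n.factorial : ℚ)) * h2 + ((k:ℚ)+1) * e1 + ((k:ℚ)+1) * e2

lemma stir_eq_zero {n k : ℕ} (h : n < k) : stir n k = 0 := by
  induction n generalizing k with
  | zero => cases k with
    | zero => omega
    | succ k => rfl
  | succ n ih =>
    cases k with
    | zero => omega
    | succ k => simp [stir, ih (by omega : n < k + 1), ih (by omega : n < k)]

lemma stir_self (n : ℕ) : stir n n = 1 := by
  induction n with
  | zero => rfl
  | succ n ih => simp [stir, ih, stir_eq_zero (Nat.lt_succ_self n)]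

lemma c_self (n : ℕ) : coeff n ((exp ℚ - 1) ^ n) = 1 := by
  have h := key n n
  rw [stir_self] at h
  have hf : (n.factorial : ℚ) ≠ 0 := by exact_mod_cast n.factorial_ne_zero
  field_simp at h
  exact h

lemma c_zero {n k : ℕ} (h : n < k) : coeff n ((exp ℚ - 1) ^ k) = 0 := by
  have hk := key n k
  rw [stir_eq_zero h] at hk
  have hf : (n.factorial : ℚ) ≠ 0 := by exact_mod_cast n.factorial_ne_zero
  simpa [hf] using hk

lemma rec_of_eq {A : PowerSeries ℚ}
    (h : PowerSeries.substOld (exp ℚ - 1) A = 2 * A - X) (n : ℕ) :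
    coeff n A = (if n = 1 then (1:ℚ) else 0) +
      ∑ k ∈ Finset.range n, coeff k A * coeff n ((exp ℚ - 1) ^ k) := by
  have h2 := congrArg (coeff n) h
  rw [PowerSeries.substOld, coeff_mk, Finset.sum_range_succ, c_self, two_mul, map_sub, map_add,
    coeff_X] at h2
  linarith [h2]

/-- The coefficient sequence of the eigen-series, defined by the recursion forced by
the functional equation. -/
noncomputable def aSeq : ℕ → ℚ
  | n => (if n = 1 then (1:ℚ) else 0) +
      ∑ k ∈ (Finset.range n).attach,
        aSeq k.1 * coeff n ((exp ℚ - 1) ^ k.1)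
  decreasing_by exact Finset.mem_range.mp k.2

lemma aSeq_eq (n : ℕ) : aSeq n = (if n = 1 then (1:ℚ) else 0) +
    ∑ k ∈ Finset.range n, aSeq k * coeff n ((exp ℚ - 1) ^ k) := by
  rw [aSeq, ← Finset.sum_attach (Finset.range n) (fun k => aSeq k * coeff n ((exp ℚ - 1) ^ k))]

lemma eq_of_rec {A : PowerSeries ℚ}
    (h : ∀ n, coeff n A = (if n = 1 then (1:ℚ) else 0) +
      ∑ k ∈ Finset.range n, coeff k A * coeff n ((exp ℚ - 1) ^ k)) :
    PowerSeries.substOld (exp ℚ - 1) A = 2 * A - X := by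
  ext n
  rw [PowerSeries.substOld, coeff_mk, Finset.sum_range_succ, c_self, two_mul, map_sub, map_add,
    coeff_X]
  have := h n
  linarith [this]

lemma coeff_eq_aSeq {A : PowerSeries ℚ}
    (h : PowerSeries.substOld (exp ℚ - 1) A = 2 * A - X) (n : ℕ) :
    coeff n A = aSeq n := by
  induction n using Nat.strong_induction_on with
  | _ n ih =>
    rw [rec_of_eq h n, aSeq_eq n]
    congr 1
    refine Finset.sum_congr rfl fun k hk => ?_
    rw [ih k (Finset.mem_range.mp hk)]

/-- There is a unique formal power series `A` over `ℚ` with zero constant coefficient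
satisfying `A(e^X - 1) = 2A - X`; moreover `n! * (coeff n A)` is always an integer
(the integers `1, 1, 4, 32, 436, 9012, ...`, counting rooted trees with `n+1` labeled
nodes all at the same height). -/
theorem stirling_transform_M_eigen_sequence :
    (∃! A : PowerSeries ℚ,
        PowerSeries.coeff 0 A = 0 ∧
        PowerSeries.substOld (PowerSeries.exp ℚ - 1) A = 2 * A - PowerSeries.X) ∧
    ∀ A : PowerSeries ℚ,
      PowerSeries.coeff 0 A = 0 →
      PowerSeries.substOld (PowerSeries.exp ℚ - 1) A = 2 * A - PowerSeries.X →
      ∀ n : ℕ, ∃ m : ℤ, (n.factorial : ℚ) * PowerSeries.coeff n A = (m : ℚ) := by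
  constructor
  · refine ⟨PowerSeries.mk aSeq, ⟨?_, ?_⟩, ?_⟩
    · rw [coeff_mk, aSeq_eq]; simp
    · exact eq_of_rec (fun n => by rw [coeff_mk, aSeq_eq n]; simp [coeff_mk])
    · rintro B ⟨-, hB⟩
      ext n
      rw [coeff_eq_aSeq hB n, coeff_mk]
  · intro A _ hA n
    induction n using Nat.strong_induction_on with
    | _ n ih =>
      choose m hm using ih
      refine ⟨(if n = 1 then 1 else 0) +
        ∑ k ∈ Finset.range n,
          (if h : k < n then m k h else 0) * (stir n k : ℤ), ?_⟩
      rw [rec_of_eq hA n, mul_add, Finset.mul_sum]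
      push_cast
      congr 1
      · split_ifs with h
        · subst h; norm_num
        · simp
      · refine Finset.sum_congr rfl fun k hk => ?_
        have hkn := Finset.mem_range.mp hk
        rw [dif_pos hkn, ← hm k hkn]
        have := key n k
        linear_combination coeff k A * this
end
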